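/- Let A be a bounded operator on a complex Hilbert space H that is quasi *-paranormal (‖A*Ax‖² ≤ ‖A³x‖·‖Ax‖ for all x). If A is quasinilpotent (spectral radius 0), then A = 0. -/

import Mathlib

/-!
With `b n = ‖Aⁿ x‖`, the quasi *-paranormal inequality and `‖A y‖² ≤ ‖A* A y‖ ‖y‖` give
`b (n + 1)³ ≤ b (n + 3) b n²`, so the ratio `b (n + 1) b (n + 2) / b n²` is nondecreasing.
Together with `b (n + 1) ≤ ‖A‖ b n` this gives `b (n + 2) ≥ D b n` for some `D > 0` as soon as
`A x ≠ 0`, hence `‖(A²)ᵐ‖ ≥ Dᵐ`, and Gelfand's formula yields `r(A)² ≥ r(A²) ≥ D > 0`.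
-/

open Filter

namespace ContinuousLinearMap

variable {𝕜 E F : Type*} [RCLike 𝕜] [NormedAddCommGroup E] [InnerProductSpace 𝕜 E]
  [CompleteSpace E] [NormedAddCommGroup F] [InnerProductSpace 𝕜 F] [CompleteSpace F]

def IsQuasiStarParanormal (A : E →L[𝕜] E) : Prop :=
  ∀ x, ‖adjoint A (A x)‖ ^ 2 ≤ ‖(A ^ 3) x‖ * ‖A x‖

theorem norm_apply_sq_le_norm_adjoint_apply_mul_norm (A : E →L[𝕜] F) (x : E) :
    ‖A x‖ ^ 2 ≤ ‖adjoint A (A x)‖ * ‖x‖ := by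
  rw [apply_norm_sq_eq_inner_adjoint_left]
  exact (RCLike.re_le_norm _).trans (norm_inner_le_norm _ _)

theorem IsQuasiStarParanormal.norm_apply_pow_three_le {A : E →L[𝕜] E}
    (hA : A.IsQuasiStarParanormal) (x : E) : ‖A x‖ ^ 3 ≤ ‖(A ^ 3) x‖ * ‖x‖ ^ 2 := by
  rcases (norm_nonneg (A x)).eq_or_lt with hAx | hAx
  · rw [← hAx, zero_pow three_ne_zero]
    positivity
  have hfour : ‖A x‖ ^ 3 * ‖A x‖ ≤ ‖(A ^ 3) x‖ * ‖x‖ ^ 2 * ‖A x‖ :=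
    calc ‖A x‖ ^ 3 * ‖A x‖ = (‖A x‖ ^ 2) ^ 2 := by ring
      _ ≤ (‖adjoint A (A x)‖ * ‖x‖) ^ 2 :=
        pow_le_pow_left₀ (by positivity) (norm_apply_sq_le_norm_adjoint_apply_mul_norm A x) 2
      _ = ‖adjoint A (A x)‖ ^ 2 * ‖x‖ ^ 2 := by ring
      _ ≤ ‖(A ^ 3) x‖ * ‖A x‖ * ‖x‖ ^ 2 := by gcongr; exact hA x
      _ = ‖(A ^ 3) x‖ * ‖x‖ ^ 2 * ‖A x‖ := by ring
  exact le_of_mul_le_mul_right hfour hAx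

end ContinuousLinearMap

section PowThreeInequality

variable {b : ℕ → ℝ} {M : ℝ}

/-- The ratio `b (n + 1) * b (n + 2) / b n ^ 2` is nondecreasing, hence bounded below by its
initial value. -/
theorem mul_sq_le_sq_mul_of_pow_three_le (hb : ∀ n, 0 ≤ b n) (hM : ∀ n, b (n + 1) ≤ M * b n)
    (hcube : ∀ n, b (n + 1) ^ 3 ≤ b (n + 3) * b n ^ 2) (n : ℕ) :
    b 1 * b 2 * b n ^ 2 ≤ b 0 ^ 2 * (b (n + 1) * b (n + 2)) := by
  induction n with
  | zero => linarith
  | succ n ih =>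
    rcases (hb n).eq_or_lt with hn | hn
    · have : b (n + 1) = 0 := le_antisymm (by simpa [← hn] using hM n) (hb _)
      rw [this, zero_pow two_ne_zero, mul_zero]
      have := hb 0; have := hb (n + 2); have := hb (n + 3)
      positivity
    refine le_of_mul_le_mul_right ?_ (pow_pos hn 2)
    calc b 1 * b 2 * b (n + 1) ^ 2 * b n ^ 2
        = b (n + 1) ^ 2 * (b 1 * b 2 * b n ^ 2) := by ring
      _ ≤ b (n + 1) ^ 2 * (b 0 ^ 2 * (b (n + 1) * b (n + 2))) := by gcongr
      _ = b 0 ^ 2 * b (n + 2) * b (n + 1) ^ 3 := by ring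
      _ ≤ b 0 ^ 2 * b (n + 2) * (b (n + 3) * b n ^ 2) := by
        have := hb 0; have := hb (n + 2); gcongr; exact hcube n
      _ = b 0 ^ 2 * (b (n + 1 + 1) * b (n + 1 + 2)) * b n ^ 2 := by ring

theorem exists_pos_pow_mul_le_of_pow_three_le (hb : ∀ n, 0 ≤ b n)
    (hM : ∀ n, b (n + 1) ≤ M * b n) (hcube : ∀ n, b (n + 1) ^ 3 ≤ b (n + 3) * b n ^ 2)
    (h1 : 0 < b 1) : ∃ D > 0, ∀ m, D ^ m * b 0 ≤ b (2 * m) := by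
  have hMb0 : 0 < M * b 0 := h1.trans_le (hM 0)
  have hM0 : 0 < M := pos_of_mul_pos_left hMb0 (hb 0)
  have h0 : 0 < b 0 := pos_of_mul_pos_right hMb0 hM0.le
  have h3 : 0 < b 3 := by
    have := hcube 0
    simp only [zero_add] at this
    exact pos_of_mul_pos_left ((pow_pos h1 3).trans_le this) (sq_nonneg _)
  have h2 : 0 < b 2 := pos_of_mul_pos_right (h3.trans_le (hM 2)) hM0.le
  have hstep : ∀ n, b 1 * b 2 * b n ≤ b 0 ^ 2 * M * b (n + 2) := by
    intro n
    rcases (hb n).eq_or_lt with hn | hn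
    · rw [← hn, mul_zero]
      have := hb (n + 2)
      positivity
    refine le_of_mul_le_mul_right ?_ hn
    calc b 1 * b 2 * b n * b n = b 1 * b 2 * b n ^ 2 := by ring
      _ ≤ b 0 ^ 2 * (b (n + 1) * b (n + 2)) := mul_sq_le_sq_mul_of_pow_three_le hb hM hcube n
      _ ≤ b 0 ^ 2 * (M * b n * b (n + 2)) := by have := hb (n + 2); gcongr; exact hM n
      _ = b 0 ^ 2 * M * b (n + 2) * b n := by ring
  set D := b 1 * b 2 / (b 0 ^ 2 * M)
  have hD : 0 < D := by positivity
  have hDstep : ∀ n, D * b n ≤ b (n + 2) := fun n => by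
    rw [div_mul_eq_mul_div, div_le_iff₀ (by positivity), mul_comm (b (n + 2))]
    exact hstep n
  refine ⟨D, hD, fun m => ?_⟩
  induction m with
  | zero => simp
  | succ m ih =>
    calc D ^ (m + 1) * b 0 = D * (D ^ m * b 0) := by ring
      _ ≤ D * b (2 * m) := by gcongr
      _ ≤ b (2 * (m + 1)) := hDstep _

end PowThreeInequality

section SpectralRadius

variable {A : Type*} [NormedRing A] [NormedAlgebra ℂ A] [CompleteSpace A]

theorem ofReal_le_spectralRadius_of_pow_le_norm_pow (a : A) {c : ℝ}
    (h : ∀ n : ℕ, c ^ n ≤ ‖a ^ n‖) : ENNReal.ofReal c ≤ spectralRadius ℂ a := by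
  refine ge_of_tendsto (spectrum.pow_norm_pow_one_div_tendsto_nhds_spectralRadius a)
    (eventually_atTop.2 ⟨1, fun n hn => ENNReal.ofReal_le_ofReal ?_⟩)
  rcases le_or_gt c 0 with hc | hc
  · exact hc.trans (by positivity)
  calc c = (c ^ n) ^ (1 / n : ℝ) := by
        rw [one_div, Real.pow_rpow_inv_natCast hc.le (by omega)]
    _ ≤ ‖a ^ n‖ ^ (1 / n : ℝ) := by gcongr; exact h n

theorem spectralRadius_pow_le_pow (a : A) (n : ℕ) :
    spectralRadius ℂ (a ^ n) ≤ spectralRadius ℂ a ^ n := by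
  cases subsingleton_or_nontrivial A
  · simp [spectralRadius, spectrum.of_subsingleton]
  refine iSup₂_le ?_
  rw [spectrum.map_pow]
  rintro _ ⟨z, hz, rfl⟩
  rw [nnnorm_pow, ENNReal.coe_pow]
  exact pow_le_pow_left₀ bot_le (le_iSup₂ (α := ENNReal) z hz) n

end SpectralRadius

theorem quasi_star_paranormal_quasinilpotent_eq_zero
    {H : Type*} [NormedAddCommGroup H] [InnerProductSpace ℂ H] [CompleteSpace H]
    (A : H →L[ℂ] H)
    (hqsp : ∀ x : H, ‖(ContinuousLinearMap.adjoint A) (A x)‖ ^ 2 ≤ ‖(A ^ 3) x‖ * ‖A x‖)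
    (hquasi : spectralRadius ℂ A = 0) :
    A = 0 := by
  by_contra hA
  obtain ⟨x, hx⟩ : ∃ x, A x ≠ 0 := by
    by_contra! h
    exact hA (ContinuousLinearMap.ext h)
  have hx0 : 0 < ‖x‖ := norm_pos_iff.2 fun h => hx (by rw [h, map_zero])
  obtain ⟨D, hD, hbD⟩ := exists_pos_pow_mul_le_of_pow_three_le (b := fun n => ‖(A ^ n) x‖)
    (fun n => norm_nonneg _)
    (fun n => by
      rw [pow_succ' A n, mul_apply_eq_comp]
      exact A.le_opNorm _)
    (fun n => by
      rw [pow_succ' A n, mul_apply_eq_comp, add_comm n 3, pow_add A 3 n, mul_apply_eq_comp]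
      exact ContinuousLinearMap.IsQuasiStarParanormal.norm_apply_pow_three_le hqsp _)
    (by simpa using norm_pos_iff.2 hx)
  have hnorm_pow : ∀ m, D ^ m ≤ ‖(A ^ 2) ^ m‖ := fun m => by
    refine le_of_mul_le_mul_right ?_ hx0
    rw [← pow_mul]
    exact (hbD m).trans ((A ^ (2 * m)).le_opNorm x)
  have := (ofReal_le_spectralRadius_of_pow_le_norm_pow _ hnorm_pow).trans
    (spectralRadius_pow_le_pow A 2)
  rw [hquasi, zero_pow two_ne_zero, nonpos_iff_eq_zero, ENNReal.ofReal_eq_zero] at this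
  exact this.not_gt hD
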